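/- arXiv:1711.08483 — 9 statements merged into one kernel-verified Lean document; each statement's English description precedes it below -/
import Mathlib

section
/- If G is a finite group, N a normal subgroup of G, and (x̄₁,…,x̄ᵣ) a tuple generating G/N with r ≥ d(G), then there exist n₁,…,nᵣ ∈ N such that (x₁n₁,…,xᵣnᵣ) generates G, where xᵢ are preimages of x̄ᵢ. -/
/-!
Gaschütz's counting argument. For `H ≤ G` with `H N = G`, let `φ_g(H)` be the number of
`ν ∈ N^ι` with `⟨g_i ν_i⟩ = H`. Summing `φ_g(K)` over `K ≤ H` counts the `ν` with every
`g_i ν_i ∈ H`; as each `g_i` lies in `H N`, this is `|H ∩ N|^|ι|`, independent of `g`.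
Since `φ_g(K) = 0` unless `K N = G`, strong induction on `H` shows that `φ_g(H)` is the same
for all `g` with `⟨g⟩ N = G`. A generating tuple `g₀` exists when `|ι| ≥ d(G)`, and
`φ_{g₀}(G) > 0` (take `ν = 1`), so `φ_g(G) > 0`.
-/

/-- A spherical system of generators: a tuple (list) of nontrivial elements
generating `G` whose product is `1`. -/
def IsSpherical {G : Type*} [Group G] (T : List G) : Prop :=
  (∀ g ∈ T, g ≠ 1) ∧ Subgroup.closure {g : G | g ∈ T} = ⊤ ∧ T.prod = 1

/-- `Σ(T)`: the union of all conjugates of the cyclic subgroups generated by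
the entries of `T`. -/
def SigmaSet {G : Type*} [Group G] (T : List G) : Set G :=
  {x : G | ∃ t ∈ T, ∃ c : G, ∃ k : ℤ, x = c * t ^ k * c⁻¹}

/-- An (unmixed) ramification structure: a pair of spherical systems of
generators which are disjoint, i.e. `Σ(T₁) ∩ Σ(T₂) = {1}`. -/
def IsRamificationStructure {G : Type*} [Group G] (T₁ T₂ : List G) : Prop :=
  IsSpherical T₁ ∧ IsSpherical T₂ ∧ SigmaSet T₁ ∩ SigmaSet T₂ = {1}

theorem List.zipWith_ofFn_right {α β γ : Type*} (f : α → β → γ) (l : List α)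
    (ν : Fin l.length → β) :
    zipWith f l (ofFn ν) = ofFn fun i => f (l.get i) (ν i) := by
  apply ext_getElem <;> simp

theorem QuotientGroup.closure_image_mk_eq_top_iff {G : Type*} [Group G] (N : Subgroup G)
    [N.Normal] (s : Set G) :
    Subgroup.closure ((QuotientGroup.mk : G → G ⧸ N) '' s) = ⊤ ↔ Subgroup.closure s ⊔ N = ⊤ := by
  rw [← coe_mk', ← MonoidHom.map_closure, ← (Subgroup.comap_injective (mk'_surjective N)).eq_iff,
    Subgroup.comap_map_eq, ker_mk', Subgroup.comap_top]

open Subgroup Set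
open scoped Pointwise

namespace Gaschutz

variable {G ι : Type*} [Group G] (N : Subgroup G)

def liftsGenerating (g : ι → G) (H : Subgroup G) : Set (ι → N) :=
  {ν | closure (range fun i => g i * ν i) = H}

lemma closure_range_mul_sup_eq (g : ι → G) (ν : ι → N) :
    closure (range fun i => g i * ν i) ⊔ N = closure (range g) ⊔ N := by
  have key : ∀ K : Subgroup G,
      closure (range fun i => g i * ν i) ≤ K ⊔ N ↔ closure (range g) ≤ K ⊔ N := by
    intro K
    simp only [closure_le, range_subset_iff, SetLike.mem_coe]
    exact forall_congr' fun i => mul_mem_cancel_right (mem_sup_right (ν i).2)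
  exact le_antisymm (sup_le ((key _).2 le_sup_left) le_sup_right)
    (sup_le ((key _).1 le_sup_left) le_sup_right)

lemma liftsGenerating_eq_empty {g : ι → G} {K : Subgroup G}
    (hK : K ⊔ N ≠ closure (range g) ⊔ N) : liftsGenerating N g K = ∅ :=
  eq_empty_of_forall_notMem fun ν hν => hK (hν ▸ closure_range_mul_sup_eq N g ν)

variable [N.Normal] {H : Subgroup G}

lemma card_mul_mem_eq (hH : H ⊔ N = ⊤) (a : G) :
    Nat.card {n : N // a * n ∈ H} = Nat.card (H.subgroupOf N) := by
  obtain ⟨h, hh, m, hm, rfl⟩ : a ∈ (H : Set G) * (N : Set G) := by rw [← mul_normal, hH]; trivial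
  refine Nat.card_congr ((Equiv.mulLeft (⟨m, hm⟩ : N)).subtypeEquiv fun n => ?_)
  simp [mem_subgroupOf, mul_assoc, mul_mem_cancel_left hh]

lemma card_forall_mul_mem_eq [Finite ι] (hH : H ⊔ N = ⊤) (g : ι → G) :
    Nat.card {ν : ι → N // ∀ i, g i * ν i ∈ H} = Nat.card (H.subgroupOf N) ^ Nat.card ι := by
  have := Fintype.ofFinite ι
  rw [Nat.card_congr (Equiv.subtypePiEquivPi (p := fun i (n : N) => g i * n ∈ H)), Nat.card_pi,
    Finset.prod_congr rfl fun i _ => card_mul_mem_eq N hH (g i), Finset.prod_const,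
    Finset.card_univ, ← Nat.card_eq_fintype_card]

open Classical in
lemma sum_card_liftsGenerating [Finite G] [Finite ι] [Fintype (Subgroup G)] (hH : H ⊔ N = ⊤)
    (g : ι → G) :
    ∑ K with K ≤ H, Nat.card (liftsGenerating N g K) =
      Nat.card (H.subgroupOf N) ^ Nat.card ι := by
  have := Fintype.ofFinite (ι → N)
  rw [← card_forall_mul_mem_eq N hH g, Nat.card_eq_fintype_card, Fintype.card_subtype,
    Finset.card_eq_sum_card_fiberwise (f := fun ν : ι → N => closure (range fun i => g i * ν i))]
  · refine Finset.sum_congr rfl fun K hK => ?_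
    rw [liftsGenerating, Nat.card_eq_fintype_card, Fintype.card_ofFinset]
    congr 1
    ext ν
    simp only [Finset.mem_filter, Finset.mem_univ, true_and, mem_ofPred_eq, iff_and_self]
    rintro rfl i
    exact (Finset.mem_filter.1 hK).2 (subset_closure (mem_range_self i))
  · intro ν hν
    simp only [Finset.coe_filter, Finset.mem_univ, true_and, mem_ofPred_eq] at hν ⊢
    exact (closure_le _).2 (range_subset_iff.2 hν)

lemma card_liftsGenerating_eq [Finite G] [Finite ι] {g g' : ι → G}
    (hg : closure (range g) ⊔ N = ⊤) (hg' : closure (range g') ⊔ N = ⊤) (H : Subgroup G) :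
    Nat.card (liftsGenerating N g H) = Nat.card (liftsGenerating N g' H) := by
  classical
  have := Fintype.ofFinite (Subgroup G)
  induction H using WellFoundedLT.induction with
  | _ H ih =>
  by_cases hH : H ⊔ N = ⊤
  · have hsum := (sum_card_liftsGenerating N hH g).trans (sum_card_liftsGenerating N hH g').symm
    have hH_mem : H ∈ ({K | K ≤ H} : Finset (Subgroup G)) := by simp
    rw [← Finset.add_sum_erase _ _ hH_mem, ← Finset.add_sum_erase _ _ hH_mem,
      Finset.sum_congr rfl fun K hK => ih K ?_] at hsum
    · exact Nat.add_right_cancel hsum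
    · simp only [Finset.mem_erase, Finset.mem_filter, Finset.mem_univ, true_and] at hK
      exact lt_of_le_of_ne hK.2 hK.1
  · rw [liftsGenerating_eq_empty N (hg ▸ hH), liftsGenerating_eq_empty N (hg' ▸ hH)]

theorem exists_closure_range_mul_eq_top [Finite G] [Finite ι] {g g₀ : ι → G}
    (hg : closure (range g) ⊔ N = ⊤) (hg₀ : closure (range g₀) = ⊤) :
    ∃ ν : ι → N, closure (range fun i => g i * ν i) = ⊤ := by
  have hg₀N : closure (range g₀) ⊔ N = ⊤ := by rw [hg₀, top_sup_eq]
  have h₀ : (1 : ι → N) ∈ liftsGenerating N g₀ ⊤ := by simpa [liftsGenerating] using hg₀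
  have hpos : 0 < Nat.card (liftsGenerating N g ⊤) := by
    rw [card_liftsGenerating_eq N hg hg₀N]
    exact Nat.card_pos_iff.2 ⟨⟨_, h₀⟩, inferInstance⟩
  exact Nat.card_pos_iff.1 hpos |>.1.elim fun ν => ⟨ν, ν.2⟩

end Gaschutz

theorem Group.exists_closure_range_eq_top_of_rank_le {G ι : Type*} [Group G] [Group.FG G]
    [Finite ι] (h : Group.rank G ≤ Nat.card ι) : ∃ g : ι → G, closure (range g) = ⊤ := by
  obtain ⟨S, hS, hSgen⟩ := Group.rank_spec G
  let e : S ↪ ι := (S.equivFin.toEmbedding.trans (Fin.castLEEmb (hS ▸ h))).trans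
    (Finite.equivFin ι).symm.toEmbedding
  refine ⟨Function.extend e Subtype.val 1, eq_top_iff.2 (hSgen ▸ closure_mono ?_)⟩
  intro s hs
  exact ⟨e ⟨s, hs⟩, e.injective.extend_apply _ _ _⟩

theorem stmt_1 {G : Type*} [Group G] [Finite G] (N : Subgroup G) [N.Normal]
    (x : List G) (hr : x.length ≥ Group.rank G)
    (hgen : Subgroup.closure
      {q : G ⧸ N | q ∈ x.map (QuotientGroup.mk : G → G ⧸ N)} = ⊤) :
    ∃ n : List G, n.length = x.length ∧ (∀ m ∈ n, m ∈ N) ∧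
      Subgroup.closure {g : G | g ∈ List.zipWith (· * ·) x n} = ⊤ := by
  obtain ⟨g₀, hg₀⟩ :=
    Group.exists_closure_range_eq_top_of_rank_le (G := G) (ι := Fin x.length) (by simpa using hr)
  have hx : closure (range x.get) ⊔ N = ⊤ := by
    rw [range_list_get, ← QuotientGroup.closure_image_mk_eq_top_iff, ← hgen]
    congr 1
    ext
    simp
  obtain ⟨ν, hν⟩ := Gaschutz.exists_closure_range_mul_eq_top N hx hg₀
  refine ⟨List.ofFn fun i => (ν i : G), List.length_ofFn, fun m hm => ?_, ?_⟩
  · obtain ⟨i, rfl⟩ := List.mem_ofFn.1 hm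
    exact (ν i).2
  · rw [List.zipWith_ofFn_right, ← hν]
    congr 1
    ext
    exact List.mem_ofFn' _ _
end

section
/- The elementary abelian group C₃ × C₃ does not admit a ramification structure (T₁, T₂) in which T₁ has size 3. -/
/-! C₃ × C₃ is a plane over 𝔽₃, so it has exactly four subgroups of order 3. If `T₁ = (a, b, c)`
generates, then `c = (ab)⁻¹` and `a`, `b` are independent, so `Σ(T₁)` contains the three lines
`⟨a⟩`, `⟨b⟩`, `⟨ab⟩`. Disjointness pushes every entry of `T₂` into the fourth line `⟨ab⁻¹⟩`, and a
single line cannot generate the non-cyclic group C₃ × C₃. -/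

open Subgroup

theorem mem_zpowers_iff_of_pow_three_eq_one {G : Type*} [Group G] {a x : G} (ha : a ^ 3 = 1) :
    x ∈ zpowers a ↔ x = 1 ∨ x = a ∨ x = a⁻¹ := by
  constructor
  · rintro ⟨k, rfl⟩
    have hk : k % 3 = 0 ∨ k % 3 = 1 ∨ k % 3 = 2 := by omega
    have ha2 : a ^ (2 : ℤ) = a⁻¹ :=
      eq_inv_of_mul_eq_one_left (by rw [← zpow_add_one]; exact_mod_cast ha)
    simp only [zpow_eq_zpow_emod' k ha]
    rcases hk with h | h | h <;> simp [h, ha2]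
  · rintro (rfl | rfl | rfl)
    exacts [one_mem _, mem_zpowers _, inv_mem (mem_zpowers _)]

section

variable {G : Type*} [Group G]

theorem zpowers_subset_sigmaSet {T : List G} {t : G} (ht : t ∈ T) :
    (zpowers t : Set G) ⊆ SigmaSet T := by
  rintro _ ⟨k, rfl⟩
  exact ⟨t, ht, 1, k, by simp⟩

theorem IsRamificationStructure.notMem_zpowers {T₁ T₂ : List G}
    (h : IsRamificationStructure T₁ T₂) {s t : G} (hs : s ∈ T₁) (ht : t ∈ T₂) :
    t ∉ zpowers s := by
  intro hts
  have hmem : t ∈ SigmaSet T₁ ∩ SigmaSet T₂ :=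
    ⟨zpowers_subset_sigmaSet hs hts, zpowers_subset_sigmaSet ht (mem_zpowers t)⟩
  rw [h.2.2] at hmem
  exact h.2.1.1 t ht hmem

theorem IsSpherical.eq_inv_mul {a b c : G} (h : IsSpherical [a, b, c]) : c = (a * b)⁻¹ :=
  eq_inv_of_mul_eq_one_right (by simpa [mul_assoc] using h.2.2)

theorem IsSpherical.closure_pair_eq_top {a b c : G} (h : IsSpherical [a, b, c]) :
    closure {a, b} = ⊤ := by
  refine top_le_iff.mp (h.2.1 ▸ (closure_le _).mpr ?_)
  have hc : c ∈ closure {a, b} := h.eq_inv_mul ▸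
    inv_mem (mul_mem (subset_closure (by simp)) (subset_closure (by simp)))
  intro g hg
  obtain rfl | rfl | rfl : g = a ∨ g = b ∨ g = c := by simpa using hg
  exacts [subset_closure (by simp), subset_closure (by simp), hc]

theorem closure_ne_top_of_subset_zpowers (hG : ¬ IsCyclic G) {s : Set G} {g : G}
    (hs : s ⊆ zpowers g) : closure s ≠ ⊤ := fun h =>
  hG (isCyclic_iff_exists_zpowers_eq_top.mpr ⟨g, top_le_iff.mp (h ▸ (closure_le _).mpr hs)⟩)

end

namespace C3xC3

local notation "V" => Multiplicative (ZMod 3) × Multiplicative (ZMod 3)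

theorem pow_three_eq_one : ∀ x : V, x ^ 3 = 1 := by decide

theorem not_isCyclic : ¬ IsCyclic V := fun _ => by
  have h := IsCyclic.exponent_eq_card (α := V) ▸
    Monoid.exponent_dvd_of_forall_pow_eq_one pow_three_eq_one
  simp at h

set_option synthInstance.maxSize 1000 in
theorem mem_zpowers_or_of_notMem_zpowers {a b : V} (ha : a ≠ 1) (hab : b ∉ zpowers a) (t : V) :
    t ∈ zpowers a ∨ t ∈ zpowers b ∨ t ∈ zpowers (a * b) ∨ t ∈ zpowers (a * b⁻¹) := by
  suffices ∀ a b t : V, a ≠ 1 → b ∉ zpowers a →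
      t ∈ zpowers a ∨ t ∈ zpowers b ∨ t ∈ zpowers (a * b) ∨ t ∈ zpowers (a * b⁻¹) from
    this a b t ha hab
  simp only [mem_zpowers_iff_of_pow_three_eq_one (pow_three_eq_one _)]
  decide

end C3xC3

open C3xC3 in
theorem stmt_3 :
    ¬ ∃ T₁ T₂ : List (Multiplicative (ZMod 3) × Multiplicative (ZMod 3)),
      T₁.length = 3 ∧ IsRamificationStructure T₁ T₂ := by
  rintro ⟨T₁, T₂, hlen, hR⟩
  obtain ⟨a, b, c, rfl⟩ := List.length_eq_three.mp hlen
  have ha : a ≠ 1 := hR.1.1 a (by simp)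
  have hab : b ∉ zpowers a := fun hb =>
    closure_ne_top_of_subset_zpowers not_isCyclic
      (Set.insert_subset_iff.mpr ⟨mem_zpowers a, Set.singleton_subset_iff.mpr hb⟩)
      hR.1.closure_pair_eq_top
  refine closure_ne_top_of_subset_zpowers not_isCyclic (g := a * b⁻¹) (fun t ht => ?_) hR.2.1.2.1
  have hta : t ∉ zpowers a := hR.notMem_zpowers (by simp) ht
  have htb : t ∉ zpowers b := hR.notMem_zpowers (by simp) ht
  have htab : t ∉ zpowers (a * b) := by
    rw [← zpowers_inv, ← hR.1.eq_inv_mul]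
    exact hR.notMem_zpowers (by simp) ht
  have := mem_zpowers_or_of_notMem_zpowers ha hab t
  tauto
end

section
/- The elementary abelian group C₂ × C₂ × C₂ does not admit a ramification structure (T₁, T₂) in which T₁ has size 4. -/
open Module Submodule

lemma mem_sigmaSet_of_mem {G : Type*} [Group G] {T : List G} {t : G} (ht : t ∈ T) :
    t ∈ SigmaSet T :=
  ⟨t, ht, 1, 1, by simp⟩

lemma IsRamificationStructure.notMem_of_mem {G : Type*} [Group G] {T₁ T₂ : List G}
    (h : IsRamificationStructure T₁ T₂) {g : G} (hg₁ : g ∈ T₁) : g ∉ T₂ := fun hg₂ ↦ by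
  have : g ∈ SigmaSet T₁ ∩ SigmaSet T₂ := ⟨mem_sigmaSet_of_mem hg₁, mem_sigmaSet_of_mem hg₂⟩
  rw [h.2.2] at this
  exact h.1.1 g hg₁ this

lemma IsSpherical.exists_apply_ne_one {G H : Type*} [Group G] [Group H] {T : List G}
    (hT : IsSpherical T) {f : G →* H} (hf : f ≠ 1) : ∃ t ∈ T, f t ≠ 1 := by
  by_contra! hker
  refine hf (MonoidHom.ker_eq_top_iff.mp (top_le_iff.mp ?_))
  rw [← hT.2.1, Subgroup.closure_le]
  exact hker

lemma span_eq_top_of_closure_eq_top {R V : Type*} [Ring R] [AddCommGroup V] [Module R V]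
    {s : Set V} (h : Subgroup.closure (Multiplicative.toAdd ⁻¹' s) = ⊤) : span R s = ⊤ := by
  rw [← AddSubgroup.toSubgroup_closure, map_eq_top_iff] at h
  rw [eq_top_iff, ← toAddSubgroup_le, top_toAddSubgroup, ← h, AddSubgroup.closure_le]
  exact subset_span

lemma ZMod.two_sum_fin_three_ne_zero_iff (r : Fin 3 → ZMod 2) :
    ∑ i, r i ≠ 0 ↔ r = Pi.single 0 1 ∨ r = Pi.single 1 1 ∨ r = Pi.single 2 1 ∨
      r = Pi.single 0 1 + Pi.single 1 1 + Pi.single 2 1 := by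
  revert r; decide

lemma exists_linearMap_ne_zero_iff {V : Type*} [AddCommGroup V] [Module (ZMod 2) V]
    (hV : finrank (ZMod 2) V = 3) {a b c d : V} (hsum : a + b + c + d = 0)
    (hspan : span (ZMod 2) {a, b, c, d} = ⊤) :
    ∃ φ : V →ₗ[ZMod 2] ZMod 2, ∀ x, φ x ≠ 0 ↔ x = a ∨ x = b ∨ x = c ∨ x = d := by
  have hd : d = a + b + c := by
    rw [eq_neg_of_add_eq_zero_right hsum, ZModModule.neg_eq_self]
  have hle : ⊤ ≤ span (ZMod 2) (Set.range ![a, b, c]) := by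
    have ha : a ∈ span (ZMod 2) (Set.range ![a, b, c]) := subset_span ⟨0, rfl⟩
    have hb : b ∈ span (ZMod 2) (Set.range ![a, b, c]) := subset_span ⟨1, rfl⟩
    have hc : c ∈ span (ZMod 2) (Set.range ![a, b, c]) := subset_span ⟨2, rfl⟩
    rw [← hspan, span_le, hd]
    simp only [Set.insert_subset_iff, Set.singleton_subset_iff, SetLike.mem_coe]
    exact ⟨ha, hb, hc, add_mem (add_mem ha hb) hc⟩
  let B := basisOfTopLeSpanOfCardEqFinrank ![a, b, c] hle (by simp [hV])
  have hB : ∀ i, B.equivFun (![a, b, c] i) = Pi.single i 1 := fun i ↦ by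
    rw [show ![a, b, c] i = B i by simp [B]]
    ext j
    simp [Pi.single_apply, eq_comm]
  refine ⟨B.sumCoords, fun x ↦ ?_⟩
  have hφ : B.sumCoords x = ∑ i, B.equivFun x i := by simp
  rw [hφ, ZMod.two_sum_fin_three_ne_zero_iff, hd, ← hB 0, ← hB 1, ← hB 2]
  simp only [← map_add, B.equivFun.injective.eq_iff]
  rfl

theorem stmt_4 :
    ¬ ∃ T₁ T₂ : List (Multiplicative (Fin 3 → ZMod 2)),
      T₁.length = 4 ∧ IsRamificationStructure T₁ T₂ := by
  rintro ⟨T₁, T₂, hlen, hT⟩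
  obtain ⟨a, b, c, d, rfl⟩ := List.length_eq_four.mp hlen
  obtain ⟨⟨-, hgen, hprod⟩, hT₂, -⟩ := id hT
  have hsum : a.toAdd + b.toAdd + c.toAdd + d.toAdd = 0 := by
    simpa [add_assoc] using congrArg Multiplicative.toAdd hprod
  have hspan : span (ZMod 2) {a.toAdd, b.toAdd, c.toAdd, d.toAdd} = ⊤ :=
    span_eq_top_of_closure_eq_top (by convert hgen using 2; ext; simp)
  obtain ⟨φ, hφ⟩ := exists_linearMap_ne_zero_iff (by simp) hsum hspan
  have hχ : φ.toAddMonoidHom.toMultiplicative ≠ 1 := fun h ↦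
    (hφ _).mpr (Or.inl rfl) (congrArg Multiplicative.toAdd (DFunLike.congr_fun h a))
  obtain ⟨t, ht, hφt⟩ := hT₂.exists_apply_ne_one hχ
  rcases (hφ _).mp (fun h ↦ hφt (congrArg Multiplicative.ofAdd h)) with h | h | h | h <;>
    exact hT.notMem_of_mem (by simp [Multiplicative.toAdd.injective h]) ht
end

section
/- For every prime p ≥ 5, the group Cₚ × Cₚ admits a ramification structure of size (3,3); explicitly, with generators x₁, x₂, the tuples T₁ = (x₁, x₂, (x₁x₂)⁻¹) and T₂ = (x₁x₂², x₁x₂⁴, (x₁²x₂⁶)⁻¹) form a ramification structure. -/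
open Multiplicative Subgroup

theorem isSpherical_triple {G : Type*} [Group G] {u v : G} (hu : u ≠ 1) (hv : v ≠ 1)
    (huv : u * v ≠ 1) (hgen : Subgroup.closure {u, v} = ⊤) :
    IsSpherical [u, v, (u * v)⁻¹] := by
  refine ⟨?_, top_unique (hgen ▸ closure_mono ?_), by simp⟩
  · simp only [List.mem_cons, List.not_mem_nil, or_false]
    rintro g (rfl | rfl | rfl)
    exacts [hu, hv, inv_ne_one.2 huv]
  · intro g hg
    rcases hg with rfl | rfl <;> simp

theorem sigmaSet_eq_biUnion_zpowers {G : Type*} [CommGroup G] (T : List G) :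
    SigmaSet T = ⋃ t ∈ T, (zpowers t : Set G) := by
  ext x
  simp [SigmaSet, mem_zpowers_iff, mul_inv_cancel_comm, eq_comm]

theorem sigmaSet_inter_sigmaSet_eq_one {G : Type*} [CommGroup G] {T₁ T₂ : List G}
    (h₁ : T₁ ≠ []) (h₂ : T₂ ≠ [])
    (hdisj : ∀ t ∈ T₁, ∀ s ∈ T₂, Disjoint (zpowers t) (zpowers s)) :
    SigmaSet T₁ ∩ SigmaSet T₂ = {1} := by
  simp only [sigmaSet_eq_biUnion_zpowers]
  refine Set.Subset.antisymm ?_ ?_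
  · rintro x ⟨hx₁, hx₂⟩
    simp only [Set.mem_iUnion, SetLike.mem_coe] at hx₁ hx₂
    obtain ⟨t, ht, hxt⟩ := hx₁
    obtain ⟨s, hs, hxs⟩ := hx₂
    exact disjoint_def.1 (hdisj t ht s hs) hxt hxs
  · obtain ⟨t, ht⟩ := List.exists_mem_of_ne_nil T₁ h₁
    obtain ⟨s, hs⟩ := List.exists_mem_of_ne_nil T₂ h₂
    rintro _ rfl
    exact ⟨Set.mem_biUnion ht (one_mem _), Set.mem_biUnion hs (one_mem _)⟩

section Coordinates

variable {R : Type*}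

def ofAdd₂ (a b : R) : Multiplicative R × Multiplicative R := (ofAdd a, ofAdd b)

@[simp]
theorem ofAdd₂_inj {a b c d : R} : ofAdd₂ a b = ofAdd₂ c d ↔ a = c ∧ b = d := by
  simp [ofAdd₂, Prod.ext_iff]

@[simp]
theorem ofAdd₂_eq_one [Zero R] {a b : R} : ofAdd₂ a b = 1 ↔ a = 0 ∧ b = 0 := by
  simp [ofAdd₂, Prod.ext_iff]

variable [CommRing R]

@[simp]
theorem ofAdd₂_mul (a b c d : R) : ofAdd₂ a b * ofAdd₂ c d = ofAdd₂ (a + c) (b + d) := rfl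

@[simp]
theorem ofAdd₂_inv (a b : R) : (ofAdd₂ a b)⁻¹ = ofAdd₂ (-a) (-b) := rfl

@[simp]
theorem ofAdd₂_pow (a b : R) (k : ℕ) : ofAdd₂ a b ^ k = ofAdd₂ (k * a) (k * b) := by
  simp [ofAdd₂, Prod.pow_def, ← ofAdd_nsmul, nsmul_eq_mul]

@[simp]
theorem ofAdd₂_zpow (a b : R) (k : ℤ) : ofAdd₂ a b ^ k = ofAdd₂ (k * a) (k * b) := by
  simp [ofAdd₂, Prod.pow_def, ← ofAdd_zsmul, zsmul_eq_mul]

theorem ofAdd₂_ne_one [Nontrivial R] {a b c d : R} (h : IsUnit (a * d - b * c)) :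
    ofAdd₂ a b ≠ 1 := by
  rintro h0
  obtain ⟨rfl, rfl⟩ := ofAdd₂_eq_one.1 h0
  simp at h

theorem disjoint_zpowers_ofAdd₂ {a b c d : R} (h : IsUnit (a * d - b * c)) :
    Disjoint (zpowers (ofAdd₂ a b)) (zpowers (ofAdd₂ c d)) := by
  rw [disjoint_def]
  intro x hx hx'
  obtain ⟨k, rfl⟩ := mem_zpowers_iff.1 hx
  obtain ⟨m, hm⟩ := mem_zpowers_iff.1 hx'
  rw [ofAdd₂_zpow, ofAdd₂_zpow, ofAdd₂_inj] at hm
  obtain ⟨hac, hbd⟩ := hm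
  have hk : (k : R) * (a * d - b * c) = 0 := by linear_combination c * hbd - d * hac
  have hk0 : (k : R) = 0 := h.mul_left_eq_zero.1 hk
  simp [hk0, ofAdd₂_eq_one]

end Coordinates

theorem closure_ofAdd₂_eq_top {n : ℕ} {a b c d : ZMod n} (h : IsUnit (a * d - b * c)) :
    Subgroup.closure {ofAdd₂ a b, ofAdd₂ c d} = ⊤ := by
  rw [eq_top_iff']
  rintro ⟨x, y⟩
  have hδ : (a * d - b * c) * h.unit⁻¹ = 1 := h.mul_val_inv
  -- Cramer's rule: `(x, y) = k • (a, b) + m • (c, d)`.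
  set k := (x.toAdd * d - y.toAdd * c) * h.unit⁻¹
  set m := (a * y.toAdd - b * x.toAdd) * h.unit⁻¹
  have hg : (x, y) = ofAdd₂ a b ^ (k.cast : ℤ) * ofAdd₂ c d ^ (m.cast : ℤ) := by
    simp only [ofAdd₂_zpow, ZMod.intCast_zmod_cast, ofAdd₂_mul]
    refine (ofAdd₂_inj (a := x.toAdd) (b := y.toAdd)).2 ⟨?_, ?_⟩
    · linear_combination (-x.toAdd) * hδ
    · linear_combination (-y.toAdd) * hδ
  rw [hg]
  exact mul_mem (zpow_mem (subset_closure (by simp)) _) (zpow_mem (subset_closure (by simp)) _)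

theorem isSpherical_ofAdd₂ {n : ℕ} [Nontrivial (ZMod n)] {a b c d : ZMod n}
    (h : IsUnit (a * d - b * c)) :
    IsSpherical [ofAdd₂ a b, ofAdd₂ c d, (ofAdd₂ a b * ofAdd₂ c d)⁻¹] := by
  refine isSpherical_triple (ofAdd₂_ne_one h) (ofAdd₂_ne_one (c := a) (d := b) ?_) ?_
    (closure_ofAdd₂_eq_top h)
  · convert h.neg using 1; ring
  · rw [ofAdd₂_mul]
    exact ofAdd₂_ne_one (c := c) (d := d) (by convert h using 1; ring)

theorem ZMod.natCast_ne_zero_of_pos_of_lt {n p : ℕ} (hn : 0 < n) (hnp : n < p) :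
    (n : ZMod p) ≠ 0 := fun h0 => by
  simpa [h0, hn.ne] using ZMod.val_natCast_of_lt hnp

theorem stmt_6 (p : ℕ) (hp : p.Prime) (h5 : 5 ≤ p) :
    let x₁ : Multiplicative (ZMod p) × Multiplicative (ZMod p) :=
      (Multiplicative.ofAdd 1, 1)
    let x₂ : Multiplicative (ZMod p) × Multiplicative (ZMod p) :=
      (1, Multiplicative.ofAdd 1)
    IsRamificationStructure [x₁, x₂, (x₁ * x₂)⁻¹]
      [x₁ * x₂ ^ 2, x₁ * x₂ ^ 4, (x₁ ^ 2 * x₂ ^ 6)⁻¹] := by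
  intro x₁ x₂
  have : Fact p.Prime := ⟨hp⟩
  have hne (n : ℕ) (hn : 0 < n) (hn5 : n < 5) : (n : ZMod p) ≠ 0 :=
    ZMod.natCast_ne_zero_of_pos_of_lt hn (by omega)
  have h2 : (2 : ZMod p) ≠ 0 := mod_cast hne 2 (by norm_num) (by norm_num)
  have h3 : (3 : ZMod p) ≠ 0 := mod_cast hne 3 (by norm_num) (by norm_num)
  have h4 : (4 : ZMod p) ≠ 0 := mod_cast hne 4 (by norm_num) (by norm_num)
  have h6 : (6 : ZMod p) ≠ 0 := by convert mul_ne_zero h2 h3 using 1; norm_num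
  have hx₁ : x₁ = ofAdd₂ 1 0 := rfl
  have hx₂ : x₂ = ofAdd₂ 0 1 := rfl
  have hT₂ : [x₁ * x₂ ^ 2, x₁ * x₂ ^ 4, (x₁ ^ 2 * x₂ ^ 6)⁻¹] =
      [ofAdd₂ 1 2, ofAdd₂ 1 4, (ofAdd₂ 1 2 * ofAdd₂ 1 4)⁻¹] := by
    simp only [hx₁, hx₂, ofAdd₂_pow, ofAdd₂_mul, ofAdd₂_inv]
    norm_num
  rw [hT₂, hx₁, hx₂]
  refine ⟨isSpherical_ofAdd₂ (by simp), isSpherical_ofAdd₂ (by ring_nf; exact h2.isUnit),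
    sigmaSet_inter_sigmaSet_eq_one (by simp) (by simp) ?_⟩
  simp only [ofAdd₂_mul, ofAdd₂_inv, List.mem_cons, List.not_mem_nil, or_false]
  rintro t (rfl | rfl | rfl) s (rfl | rfl | rfl) <;>
    refine disjoint_zpowers_ofAdd₂ (Ne.isUnit ?_) <;> ring_nf <;> simp [h2, h3, h4, h6]
end

section
/- The group C₂ × C₂ × C₂ × C₂ admits a ramification structure of size (5,5); explicitly, with generators x₁,…,x₄, the tuples T₁ = (x₁, x₂, x₃, x₄, (x₁x₂x₃x₄)⁻¹) and T₂ = (x₁x₂, x₂x₃, x₃x₄, x₁x₂x₃, x₂x₃x₄) form a ramification structure. -/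
/-! In an elementary abelian 2-group conjugation is trivial and every cyclic subgroup is `{1, t}`,
so `Σ(T) = T ∪ {1}` and `Σ(T₁) ∩ Σ(T₂) = {1}` amounts to the tuples having no common entry.
Everything else is a finite check in `C₂⁴`; generation is checked by writing every element as
the product of a sub-tuple. -/

section CommGroup

variable {G : Type*} [CommGroup G]

theorem mem_sigmaSet_iff_exists_mem_zpowers {T : List G} {y : G} :
    y ∈ SigmaSet T ↔ ∃ t ∈ T, y ∈ Subgroup.zpowers t := by
  simp only [SigmaSet, Set.mem_ofPred_eq, Subgroup.mem_zpowers_iff, mul_inv_cancel_comm]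
  refine exists_congr fun t => and_congr_right fun _ => ?_
  exact ⟨fun ⟨_, k, hk⟩ => ⟨k, hk.symm⟩, fun ⟨k, hk⟩ => ⟨1, k, hk.symm⟩⟩

theorem eq_one_or_eq_of_mem_zpowers {t y : G} (ht : t * t = 1) (hy : y ∈ Subgroup.zpowers t) :
    y = 1 ∨ y = t := by
  obtain ⟨k, rfl⟩ := Subgroup.mem_zpowers_iff.mp hy
  rcases Int.even_or_odd' k with ⟨m, rfl | rfl⟩
  · left
    rw [zpow_mul, zpow_two, ht, one_zpow]
  · right
    rw [zpow_add_one, zpow_mul, zpow_two, ht, one_zpow, one_mul]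

theorem sigmaSet_inter_eq_one_of_disjoint (hG : ∀ g : G, g * g = 1) {T₁ T₂ : List G}
    (h₁ : T₁ ≠ []) (h₂ : T₂ ≠ []) (hdisj : ∀ t ∈ T₁, t ∉ T₂) :
    SigmaSet T₁ ∩ SigmaSet T₂ = {1} := by
  have one_mem {T : List G} (hT : T ≠ []) : (1 : G) ∈ SigmaSet T := by
    obtain ⟨t, ht⟩ := List.exists_mem_of_ne_nil T hT
    exact mem_sigmaSet_iff_exists_mem_zpowers.mpr ⟨t, ht, one_mem _⟩
  have eq_one_or_mem {T : List G} {y : G} (hy : y ∈ SigmaSet T) : y = 1 ∨ y ∈ T := by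
    obtain ⟨t, ht, hyt⟩ := mem_sigmaSet_iff_exists_mem_zpowers.mp hy
    exact (eq_one_or_eq_of_mem_zpowers (hG t) hyt).imp_right fun hyt : y = t => hyt ▸ ht
  refine Set.eq_singleton_iff_unique_mem.mpr ⟨⟨one_mem h₁, one_mem h₂⟩, ?_⟩
  rintro y ⟨hy₁, hy₂⟩
  rcases eq_one_or_mem hy₁ with rfl | hyT₁
  · rfl
  rcases eq_one_or_mem hy₂ with rfl | hyT₂
  · rfl
  exact absurd hyT₂ (hdisj y hyT₁)

end CommGroup

theorem closure_eq_top_of_forall_exists_sublists_prod {G : Type*} [Group G] {T : List G}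
    (h : ∀ g : G, ∃ s ∈ T.sublists, s.prod = g) : Subgroup.closure {g | g ∈ T} = ⊤ := by
  refine eq_top_iff.mpr fun g _ => ?_
  obtain ⟨s, hs, rfl⟩ := h g
  exact Subgroup.list_prod_mem _ fun t ht =>
    Subgroup.subset_closure ((List.mem_sublists.mp hs).subset ht)

theorem stmt_8 :
    let x : Fin 4 → Multiplicative (Fin 4 → ZMod 2) :=
      fun i => Multiplicative.ofAdd (Pi.single i 1)
    IsRamificationStructure
      [x 0, x 1, x 2, x 3, (x 0 * x 1 * x 2 * x 3)⁻¹]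
      [x 0 * x 1, x 1 * x 2, x 2 * x 3, x 0 * x 1 * x 2, x 1 * x 2 * x 3] := by
  dsimp only
  refine ⟨⟨by decide, closure_eq_top_of_forall_exists_sublists_prod (by decide), by decide⟩,
    ⟨by decide, closure_eq_top_of_forall_exists_sublists_prod (by decide), by decide⟩,
    sigmaSet_inter_eq_one_of_disjoint (by decide) (List.cons_ne_nil _ _) (List.cons_ne_nil _ _)
      (by decide)⟩
end

section
/- The group C₂ × C₂ × C₂ admits a ramification structure of size (5,6); explicitly, T₁ = (x₁x₂, x₁x₃, x₂x₃, x₁x₂x₃, x₁x₂x₃) and T₂ = (x₁, x₂, x₃, x₁, x₂, x₃) form a ramification structure. -/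
lemma one_mem_sigmaSet {G : Type*} [Group G] {T : List G} (hT : T ≠ []) : 1 ∈ SigmaSet T := by
  obtain ⟨t, ht⟩ := List.exists_mem_of_ne_nil T hT
  exact ⟨t, ht, 1, 0, by simp⟩

lemma closure_eq_top_of_forall_exists_sublist_prod_eq {G : Type*} [Group G] {T : List G}
    (h : ∀ g : G, ∃ l ∈ T.sublists, l.prod = g) : Subgroup.closure {g : G | g ∈ T} = ⊤ := by
  refine Subgroup.eq_top_iff' _ |>.mpr fun g => ?_
  obtain ⟨l, hl, rfl⟩ := h g
  exact list_prod_mem fun x hx =>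
    Subgroup.subset_closure ((List.mem_sublists.mp hl).subset hx)

section ExponentTwo

variable {G : Type*} [CommGroup G]

lemma zpow_eq_one_or_eq_self_of_sq_eq_one {t : G} (ht : t ^ 2 = 1) (k : ℤ) :
    t ^ k = 1 ∨ t ^ k = t := by
  rcases Int.even_or_odd' k with ⟨m, rfl | rfl⟩
  · left
    rw [zpow_mul, zpow_ofNat, ht, one_zpow]
  · right
    rw [zpow_add, zpow_mul, zpow_ofNat, ht, one_zpow, one_mul, zpow_one]

lemma sigmaSet_subset_of_sq_eq_one (hG : ∀ g : G, g ^ 2 = 1) (T : List G) :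
    SigmaSet T ⊆ insert 1 {t | t ∈ T} := by
  rintro _ ⟨t, ht, c, k, rfl⟩
  rw [mul_inv_cancel_comm]
  rcases zpow_eq_one_or_eq_self_of_sq_eq_one (hG t) k with h | h <;> rw [h]
  exacts [Set.mem_insert _ _, Set.mem_insert_of_mem _ ht]

lemma sigmaSet_inter_eq_singleton_one_of_sq_eq_one (hG : ∀ g : G, g ^ 2 = 1) {T₁ T₂ : List G}
    (h₁ : T₁ ≠ []) (h₂ : T₂ ≠ []) (h : ∀ t ∈ T₁, t ∉ T₂) :
    SigmaSet T₁ ∩ SigmaSet T₂ = {1} := by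
  refine Set.Subset.antisymm (fun y ⟨hy₁, hy₂⟩ => ?_) ?_
  · rcases sigmaSet_subset_of_sq_eq_one hG T₁ hy₁ with rfl | hy₁'
    · rfl
    rcases sigmaSet_subset_of_sq_eq_one hG T₂ hy₂ with rfl | hy₂'
    · rfl
    exact absurd hy₂' (h y hy₁')
  · rintro _ rfl
    exact ⟨one_mem_sigmaSet h₁, one_mem_sigmaSet h₂⟩

end ExponentTwo

theorem stmt_9 :
    let x : Fin 3 → Multiplicative (Fin 3 → ZMod 2) :=
      fun i => Multiplicative.ofAdd (Pi.single i 1)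
    IsRamificationStructure
      [x 0 * x 1, x 0 * x 2, x 1 * x 2, x 0 * x 1 * x 2, x 0 * x 1 * x 2]
      [x 0, x 1, x 2, x 0, x 1, x 2] := by
  intro x
  have hsq : ∀ g : Multiplicative (Fin 3 → ZMod 2), g ^ 2 = 1 := by decide
  refine ⟨⟨by decide, closure_eq_top_of_forall_exists_sublist_prod_eq (by decide), by decide⟩,
    ⟨by decide, closure_eq_top_of_forall_exists_sublist_prod_eq (by decide), by decide⟩,
    sigmaSet_inter_eq_singleton_one_of_sq_eq_one hsq (by simp) (by simp) (by decide)⟩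
end

section
/- If an elementary abelian p-group G with p odd admits a ramification structure of size (r₁, r₂), then G also admits one of size (r₁+1, r₂). -/
/-!
Since `p` is odd, every `t ∈ G` has the square root `s = t ^ ((p + 1) / 2)`, which is a power
of `t`. Replacing an entry `t` of `T₁` by the two entries `s, s` keeps `T₁` spherical, because
`s * s = t`, and can only shrink `Σ(T₁)`, because `⟨s⟩ ≤ ⟨t⟩`; so disjointness from `Σ(T₂)`
is preserved.
-/

theorem pow_succ_mul_pow_succ_eq_self {M : Type*} [Monoid M] {t : M} {m : ℕ}
    (ht : t ^ (2 * m + 1) = 1) : t ^ (m + 1) * t ^ (m + 1) = t := by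
  rw [← pow_add, show m + 1 + (m + 1) = 2 * m + 1 + 1 by ring, pow_succ, ht, one_mul]

section

variable {G : Type*} [Group G]

theorem one_mem_sigmaSet_iff {T : List G} : (1 : G) ∈ SigmaSet T ↔ T ≠ [] := by
  constructor
  · rintro ⟨t, ht, -⟩ rfl
    simp at ht
  · intro hT
    obtain ⟨t, ht⟩ := List.exists_mem_of_ne_nil T hT
    exact ⟨t, ht, 1, 0, by simp⟩

theorem sigmaSet_subset_of_forall_mem_zpowers {T T' : List G}
    (h : ∀ s ∈ T', ∃ t ∈ T, s ∈ Subgroup.zpowers t) : SigmaSet T' ⊆ SigmaSet T := by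
  rintro x ⟨s, hs, c, k, rfl⟩
  obtain ⟨t, ht, n, rfl⟩ := h s hs
  exact ⟨t, ht, c, n * k, by rw [zpow_mul]⟩

theorem IsSpherical.cons_cons_of_mul_self_eq {s t : G} {rest : List G}
    (hT : IsSpherical (t :: rest)) (hst : s * s = t) : IsSpherical (s :: s :: rest) := by
  obtain ⟨hne, hgen, hprod⟩ := hT
  refine ⟨?_, ?_, ?_⟩
  · have hs : s ≠ 1 := by
      rintro rfl
      exact hne t List.mem_cons_self (by rw [← hst, one_mul])
    intro g hg
    simp only [List.mem_cons] at hg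
    rcases hg with rfl | rfl | hg
    · exact hs
    · exact hs
    · exact hne g (List.mem_cons_of_mem _ hg)
  · rw [eq_top_iff, ← hgen, Subgroup.closure_le]
    intro g hg
    rcases List.mem_cons.mp hg with rfl | hg
    · rw [← hst]
      exact mul_mem (Subgroup.subset_closure (by simp)) (Subgroup.subset_closure (by simp))
    · exact Subgroup.subset_closure (by simp [hg])
  · rw [List.prod_cons, List.prod_cons, ← mul_assoc, hst, ← List.prod_cons, hprod]

theorem IsRamificationStructure.of_sigmaSet_subset {T₁ T₁' T₂ : List G}
    (h : IsRamificationStructure T₁ T₂) (hT₁' : IsSpherical T₁') (hne : T₁' ≠ [])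
    (hsub : SigmaSet T₁' ⊆ SigmaSet T₁) : IsRamificationStructure T₁' T₂ := by
  obtain ⟨-, hT₂, hdisj⟩ := h
  refine ⟨hT₁', hT₂, subset_antisymm ?_ ?_⟩
  · exact hdisj ▸ Set.inter_subset_inter_left _ hsub
  · rintro _ rfl
    exact ⟨one_mem_sigmaSet_iff.mpr hne, (hdisj.ge rfl).2⟩

theorem IsRamificationStructure.cons_cons_of_mul_self_eq {s t : G} {rest T₂ : List G}
    (h : IsRamificationStructure (t :: rest) T₂) (hst : s * s = t)
    (hs : s ∈ Subgroup.zpowers t) : IsRamificationStructure (s :: s :: rest) T₂ := by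
  refine h.of_sigmaSet_subset (h.1.cons_cons_of_mul_self_eq hst) (List.cons_ne_nil _ _) ?_
  refine sigmaSet_subset_of_forall_mem_zpowers fun u hu => ?_
  simp only [List.mem_cons] at hu
  rcases hu with rfl | rfl | hu
  · exact ⟨t, List.mem_cons_self, hs⟩
  · exact ⟨t, List.mem_cons_self, hs⟩
  · exact ⟨u, List.mem_cons_of_mem _ hu, Subgroup.mem_zpowers u⟩

end

theorem stmt_10_general {G : Type*} [CommGroup G] (p : ℕ)
    (hodd : Odd p) (hG : ∀ g : G, g ^ p = 1) (r₁ r₂ : ℕ)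
    (h : ∃ T₁ T₂ : List G, T₁.length = r₁ ∧ T₂.length = r₂ ∧
      IsRamificationStructure T₁ T₂) :
    ∃ T₁ T₂ : List G, T₁.length = r₁ + 1 ∧ T₂.length = r₂ ∧
      IsRamificationStructure T₁ T₂ := by
  obtain ⟨T₁, T₂, rfl, rfl, hR⟩ := h
  obtain ⟨t, rest, rfl⟩ :=
    List.exists_cons_of_ne_nil (one_mem_sigmaSet_iff.mp (hR.2.2.ge rfl).1)
  obtain ⟨m, rfl⟩ := hodd
  exact ⟨_, T₂, rfl, rfl, hR.cons_cons_of_mul_self_eq (pow_succ_mul_pow_succ_eq_self (hG t))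
    (Subgroup.npow_mem_zpowers t _)⟩

theorem stmt_10 {G : Type*} [CommGroup G] [Finite G] (p : ℕ) (hp : p.Prime)
    (hodd : Odd p) (hG : ∀ g : G, g ^ p = 1) (r₁ r₂ : ℕ)
    (h : ∃ T₁ T₂ : List G, T₁.length = r₁ ∧ T₂.length = r₂ ∧
      IsRamificationStructure T₁ T₂) :
    ∃ T₁ T₂ : List G, T₁.length = r₁ + 1 ∧ T₂.length = r₂ ∧
      IsRamificationStructure T₁ T₂ :=
  stmt_10_general p hodd hG r₁ r₂ h
end

section
/- If an elementary abelian 2-group G admits a ramification structure of size (r₁, r₂), then G also admits one of size (r₁+2, r₂). -/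
/-! Appending a pair `t, t⁻¹` (in exponent 2, the pair `t, t`) with `t` an entry of `T₁`
keeps the product `1`, keeps the generated subgroup, and adds nothing to `Σ(T₁)`, since `t⁻¹`
generates the same cyclic subgroup as `t`. Such a `t` exists because `1 ∈ Σ(T₁) ∩ Σ(T₂)` forces `T₁ ≠ []`. -/

section

variable {G : Type*} [Group G]

theorem sigmaSet_append_pair_inv {T : List G} {t : G} (ht : t ∈ T) :
    SigmaSet (T ++ [t, t⁻¹]) = SigmaSet T := by
  ext x
  constructor
  · rintro ⟨s, hs, c, k, rfl⟩
    rcases List.mem_append.1 hs with hs | hs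
    · exact ⟨s, hs, c, k, rfl⟩
    · simp only [List.mem_cons, List.not_mem_nil, or_false] at hs
      rcases hs with rfl | rfl
      · exact ⟨s, ht, c, k, rfl⟩
      · exact ⟨t, ht, c, -k, by rw [inv_zpow']⟩
  · rintro ⟨s, hs, c, k, rfl⟩
    exact ⟨s, List.mem_append_left _ hs, c, k, rfl⟩

theorem IsSpherical.append_pair_inv {T : List G} (hT : IsSpherical T) {t : G} (ht : t ∈ T) :
    IsSpherical (T ++ [t, t⁻¹]) := by
  obtain ⟨hne, hgen, hprod⟩ := hT
  refine ⟨fun g hg => ?_, ?_, by simp [hprod]⟩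
  · simp only [List.mem_append, List.mem_cons, List.not_mem_nil, or_false] at hg
    rcases hg with hg | rfl | rfl
    · exact hne g hg
    · exact hne g ht
    · exact inv_ne_one.2 (hne t ht)
  · rw [eq_top_iff, ← hgen]
    exact Subgroup.closure_mono fun g hg => List.mem_append_left _ hg

theorem SigmaSet.nonempty_iff_ne_nil {T : List G} : (SigmaSet T).Nonempty ↔ T ≠ [] := by
  refine ⟨fun ⟨x, s, hs, _⟩ hT => by simp [hT] at hs, fun hT => ?_⟩
  obtain ⟨t, ht⟩ := List.exists_mem_of_ne_nil T hT
  exact ⟨t, t, ht, 1, 1, by simp⟩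

namespace IsRamificationStructure

variable {T₁ T₂ : List G}

theorem left_ne_nil (h : IsRamificationStructure T₁ T₂) : T₁ ≠ [] := by
  have h1 : (1 : G) ∈ SigmaSet T₁ ∩ SigmaSet T₂ := by rw [h.2.2]; rfl
  exact SigmaSet.nonempty_iff_ne_nil.1 ⟨1, h1.1⟩

theorem append_pair_inv (h : IsRamificationStructure T₁ T₂) {t : G} (ht : t ∈ T₁) :
    IsRamificationStructure (T₁ ++ [t, t⁻¹]) T₂ :=
  ⟨h.1.append_pair_inv ht, h.2.1, by rw [sigmaSet_append_pair_inv ht]; exact h.2.2⟩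

end IsRamificationStructure

end

theorem stmt_11_general {G : Type*} [CommGroup G] (r₁ r₂ : ℕ)
    (h : ∃ T₁ T₂ : List G, T₁.length = r₁ ∧ T₂.length = r₂ ∧
      IsRamificationStructure T₁ T₂) :
    ∃ T₁ T₂ : List G, T₁.length = r₁ + 2 ∧ T₂.length = r₂ ∧
      IsRamificationStructure T₁ T₂ := by
  obtain ⟨T₁, T₂, rfl, rfl, hT⟩ := h
  obtain ⟨t, ht⟩ := List.exists_mem_of_ne_nil T₁ hT.left_ne_nil
  exact ⟨T₁ ++ [t, t⁻¹], T₂, by simp, rfl, hT.append_pair_inv ht⟩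

theorem stmt_11 {G : Type*} [CommGroup G] [Finite G]
    (hG : ∀ g : G, g ^ 2 = 1) (r₁ r₂ : ℕ)
    (h : ∃ T₁ T₂ : List G, T₁.length = r₁ ∧ T₂.length = r₂ ∧
      IsRamificationStructure T₁ T₂) :
    ∃ T₁ T₂ : List G, T₁.length = r₁ + 2 ∧ T₂.length = r₂ ∧
      IsRamificationStructure T₁ T₂ :=
  stmt_11_general r₁ r₂ h
end

section
/- Let G and G* be finite groups of coprime order. If G × G* admits a ramification structure of size (r, s), then G admits a ramification structure of size (r₁, r₂) for some r₁ ≤ r, r₂ ≤ s (assuming G is not cyclic, in particular the projections after deleting identity entries are nonempty and form a ramification structure). Moreover, if G has odd order and admits such a structure, then G admits a ramification structure of size exactly (r, s). -/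
/-!
A ramification structure of `G × G*` projects onto one of `G`: the image of a generating tuple
with product `1` generates `G` and has product `1`, and deleting identity entries changes
neither. For disjointness, coprimality gives an exponent `e` with `(g, h) ^ e = (g, 1)` for
all `(g, h)`, so a common element `x` of `Σ(T₁)` and `Σ(T₂)` lifts to `(x, 1)` in
`Σ(A₁) ∩ Σ(A₂) = {1}`.

In odd order no nontrivial element is an involution, so a spherical system `z :: L` can be
lengthened by one entry to `z ^ 2 :: z⁻¹ :: L` without enlarging `Σ`; repeating this pads a
ramification structure to any larger size.
-/

section

variable {G : Type*} [Group G]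

theorem sigmaSet_subset_of_forall_zpow {T' T : List G}
    (h : ∀ t' ∈ T', ∃ t ∈ T, ∃ m : ℤ, t' = t ^ m) :
    SigmaSet T' ⊆ SigmaSet T := by
  rintro x ⟨t', ht', c, k, rfl⟩
  obtain ⟨t, ht, m, rfl⟩ := h t' ht'
  exact ⟨t, ht, c, m * k, by rw [zpow_mul]⟩

theorem sigmaSet_mono {T' T : List G} (h : T' ⊆ T) : SigmaSet T' ⊆ SigmaSet T :=
  sigmaSet_subset_of_forall_zpow fun t ht => ⟨t, h ht, 1, (zpow_one t).symm⟩

theorem sigmaSet_inter_eq_one {T₁ T₂ : List G} (h₁ : T₁ ≠ []) (h₂ : T₂ ≠ [])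
    (h : ∀ x ∈ SigmaSet T₁ ∩ SigmaSet T₂, x = 1) : SigmaSet T₁ ∩ SigmaSet T₂ = {1} :=
  Set.eq_singleton_iff_unique_mem.mpr
    ⟨⟨one_mem_sigmaSet_iff.mpr h₁, one_mem_sigmaSet_iff.mpr h₂⟩, h⟩

theorem IsSpherical.ne_nil [Nontrivial G] {T : List G} (hT : IsSpherical T) : T ≠ [] := by
  rintro rfl
  exact (bot_ne_top : (⊥ : Subgroup G) ≠ ⊤) (by simpa using hT.2.1)

theorem List.prod_filter_ne_one [DecidableEq G] (l : List G) :
    (l.filter (· ≠ 1)).prod = l.prod := by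
  induction l <;> grind

theorem IsSpherical.map_filter_ne_one {H : Type*} [Group H] [DecidableEq H] {A : List G}
    (hA : IsSpherical A) (f : G →* H) (hf : Function.Surjective f) :
    IsSpherical ((A.map f).filter (· ≠ 1)) := by
  obtain ⟨-, hgen, hprod⟩ := hA
  refine ⟨fun g hg => by simpa using (List.mem_filter.mp hg).2, ?_, ?_⟩
  · have hset : {g : H | g ∈ (A.map f).filter (· ≠ 1)} = f '' {a | a ∈ A} \ {1} := by
      ext; simp
    rw [hset, Subgroup.closure_sdiff_one, ← MonoidHom.map_closure, hgen,
      Subgroup.map_top_of_surjective f hf]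
  · rw [List.prod_filter_ne_one, List.prod_hom, hprod, map_one]

theorem sq_ne_one_of_odd_natCard (hodd : Odd (Nat.card G)) {z : G} (hz : z ≠ 1) : z ^ 2 ≠ 1 :=
  fun h => hz <| (Nat.coprime_two_right.mpr hodd).pow_left_bijective.injective <| by
    simpa using h

theorem IsSpherical.exists_length_succ [Nontrivial G] (hodd : Odd (Nat.card G)) {T : List G}
    (hT : IsSpherical T) :
    ∃ T' : List G, T'.length = T.length + 1 ∧ IsSpherical T' ∧ SigmaSet T' ⊆ SigmaSet T := by
  obtain ⟨z, L, rfl⟩ := List.exists_cons_of_ne_nil hT.ne_nil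
  obtain ⟨hnt, hgen, hprod⟩ := hT
  have hz : z ≠ 1 := hnt z List.mem_cons_self
  refine ⟨z ^ 2 :: z⁻¹ :: L, by simp, ⟨?_, ?_, ?_⟩, ?_⟩
  · simp only [List.mem_cons]
    rintro g (rfl | rfl | hg)
    · exact sq_ne_one_of_odd_natCard hodd hz
    · exact inv_ne_one.mpr hz
    · exact hnt g (List.mem_cons_of_mem z hg)
  · rw [eq_top_iff, ← hgen, Subgroup.closure_le]
    set K := Subgroup.closure {g : G | g ∈ z ^ 2 :: z⁻¹ :: L}
    intro g hg
    rcases List.mem_cons.mp hg with rfl | hg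
    · have hsq : g ^ 2 ∈ K := Subgroup.subset_closure (by simp)
      have hinv : g⁻¹ ∈ K := Subgroup.subset_closure (by simp)
      simpa [pow_two] using K.mul_mem hsq hinv
    · exact Subgroup.subset_closure (by simp [hg])
  · rw [← hprod]
    simp [pow_two, mul_assoc]
  · refine sigmaSet_subset_of_forall_zpow ?_
    simp only [List.forall_mem_cons]
    exact ⟨⟨z, List.mem_cons_self, 2, by simp⟩, ⟨z, List.mem_cons_self, -1, by simp⟩,
      fun t ht => ⟨t, List.mem_cons_of_mem z ht, 1, by simp⟩⟩

theorem IsSpherical.exists_length_add [Nontrivial G] (hodd : Odd (Nat.card G)) {T : List G}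
    (hT : IsSpherical T) (k : ℕ) :
    ∃ T' : List G, T'.length = T.length + k ∧ IsSpherical T' ∧ SigmaSet T' ⊆ SigmaSet T := by
  induction k with
  | zero => exact ⟨T, rfl, hT, subset_rfl⟩
  | succ k ih =>
    obtain ⟨T', hlen, hT', hsub⟩ := ih
    obtain ⟨T'', hlen', hT'', hsub'⟩ := hT'.exists_length_succ hodd
    exact ⟨T'', by omega, hT'', hsub'.trans hsub⟩

theorem IsRamificationStructure.nontrivial {T₁ T₂ : List G}
    (h : IsRamificationStructure T₁ T₂) : Nontrivial G := by
  have hone : (1 : G) ∈ SigmaSet T₁ ∩ SigmaSet T₂ := h.2.2 ▸ rfl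
  obtain ⟨t, ht⟩ := List.exists_mem_of_ne_nil T₁ (one_mem_sigmaSet_iff.mp hone.1)
  exact ⟨⟨t, 1, h.1.1 t ht⟩⟩

theorem IsRamificationStructure.exists_length_eq (hodd : Odd (Nat.card G)) {T₁ T₂ : List G}
    (h : IsRamificationStructure T₁ T₂) {r s : ℕ} (hr : T₁.length ≤ r) (hs : T₂.length ≤ s) :
    ∃ T₁' T₂' : List G, T₁'.length = r ∧ T₂'.length = s ∧ IsRamificationStructure T₁' T₂' := by
  have := h.nontrivial
  obtain ⟨T₁', hlen₁, hT₁, hsub₁⟩ := h.1.exists_length_add hodd (r - T₁.length)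
  obtain ⟨T₂', hlen₂, hT₂, hsub₂⟩ := h.2.1.exists_length_add hodd (s - T₂.length)
  refine ⟨T₁', T₂', by omega, by omega, hT₁, hT₂,
    sigmaSet_inter_eq_one hT₁.ne_nil hT₂.ne_nil fun x hx => ?_⟩
  simpa [h.2.2] using Set.inter_subset_inter hsub₁ hsub₂ hx

section Coprime

variable {G' : Type*} [Group G']

theorem exists_zpow_eq_fst_one (hcop : Nat.Coprime (Nat.card G) (Nat.card G')) :
    ∃ e : ℤ, ∀ a : G × G', a ^ e = (a.1, 1) := by
  refine ⟨Nat.card G' * (Nat.card G).gcdB (Nat.card G'), fun a => Prod.ext ?_ ?_⟩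
  · have bezout := congrArg (a.1 ^ ·) (Nat.gcd_eq_gcd_ab (Nat.card G) (Nat.card G'))
    simp only [hcop.gcd_eq_one, Nat.cast_one, zpow_one, zpow_add, zpow_mul, zpow_natCast,
      pow_card_eq_one', one_zpow, one_mul] at bezout
    simpa [zpow_mul] using bezout.symm
  · simp [zpow_mul, zpow_natCast, pow_card_eq_one']

theorem mk_one_mem_sigmaSet_of_mem_map_fst (hcop : Nat.Coprime (Nat.card G) (Nat.card G'))
    {A : List (G × G')} {x : G} (hx : x ∈ SigmaSet (A.map Prod.fst)) :
    ((x, 1) : G × G') ∈ SigmaSet A := by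
  obtain ⟨e, he⟩ := exists_zpow_eq_fst_one hcop (G := G) (G' := G')
  obtain ⟨_, ht, c, k, rfl⟩ := hx
  obtain ⟨a, ha, rfl⟩ := List.mem_map.mp ht
  refine ⟨a, ha, (c, 1), e * k, ?_⟩
  rw [zpow_mul, he]
  ext <;> simp

theorem IsRamificationStructure.map_fst_filter_ne_one [DecidableEq G] [Nontrivial G]
    (hcop : Nat.Coprime (Nat.card G) (Nat.card G')) {A₁ A₂ : List (G × G')}
    (hA : IsRamificationStructure A₁ A₂) :
    IsRamificationStructure ((A₁.map Prod.fst).filter (· ≠ 1))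
      ((A₂.map Prod.fst).filter (· ≠ 1)) := by
  obtain ⟨hS₁, hS₂, hdisj⟩ := hA
  have hsurj : Function.Surjective (MonoidHom.fst G G') := fun g => ⟨(g, 1), rfl⟩
  have hT₁ := hS₁.map_filter_ne_one _ hsurj
  have hT₂ := hS₂.map_filter_ne_one _ hsurj
  refine ⟨hT₁, hT₂, sigmaSet_inter_eq_one hT₁.ne_nil hT₂.ne_nil fun x ⟨hx₁, hx₂⟩ => ?_⟩
  have hlift : ((x, 1) : G × G') ∈ SigmaSet A₁ ∩ SigmaSet A₂ :=
    ⟨mk_one_mem_sigmaSet_of_mem_map_fst hcop (sigmaSet_mono (List.filter_subset_self _) hx₁),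
      mk_one_mem_sigmaSet_of_mem_map_fst hcop (sigmaSet_mono (List.filter_subset_self _) hx₂)⟩
  rw [hdisj] at hlift
  exact congrArg Prod.fst hlift

end Coprime

end

theorem stmt_19_general {G G' : Type*} [Group G] [Group G']
    [DecidableEq G]
    (hcop : Nat.Coprime (Nat.card G) (Nat.card G'))
    (hnc : ¬ IsCyclic G)
    (r s : ℕ) (A₁ A₂ : List (G × G')) (hl₁ : A₁.length = r) (hl₂ : A₂.length = s)
    (hA : IsRamificationStructure A₁ A₂) :
    (IsRamificationStructure ((A₁.map Prod.fst).filter (· ≠ 1))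
        ((A₂.map Prod.fst).filter (· ≠ 1)) ∧
      ((A₁.map Prod.fst).filter (· ≠ 1)).length ≤ r ∧
      ((A₂.map Prod.fst).filter (· ≠ 1)).length ≤ s) ∧
    (Odd (Nat.card G) →
      ∃ T₁ T₂ : List G, T₁.length = r ∧ T₂.length = s ∧
        IsRamificationStructure T₁ T₂) := by
  have : Nontrivial G := not_subsingleton_iff_nontrivial.mp fun _ => hnc isCyclic_of_subsingleton
  have hram := hA.map_fst_filter_ne_one hcop
  have hlen₁ : ((A₁.map Prod.fst).filter (· ≠ 1)).length ≤ r :=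
    hl₁ ▸ (List.length_filter_le _ _).trans_eq (List.length_map _)
  have hlen₂ : ((A₂.map Prod.fst).filter (· ≠ 1)).length ≤ s :=
    hl₂ ▸ (List.length_filter_le _ _).trans_eq (List.length_map _)
  exact ⟨⟨hram, hlen₁, hlen₂⟩, fun hodd => hram.exists_length_eq hodd hlen₁ hlen₂⟩

theorem stmt_19 {G G' : Type*} [Group G] [Group G'] [Finite G] [Finite G']
    [DecidableEq G]
    (hcop : Nat.Coprime (Nat.card G) (Nat.card G'))
    (hnc : ¬ IsCyclic G)
    (r s : ℕ) (A₁ A₂ : List (G × G')) (hl₁ : A₁.length = r) (hl₂ : A₂.length = s)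
    (hA : IsRamificationStructure A₁ A₂) :
    (IsRamificationStructure ((A₁.map Prod.fst).filter (· ≠ 1))
        ((A₂.map Prod.fst).filter (· ≠ 1)) ∧
      ((A₁.map Prod.fst).filter (· ≠ 1)).length ≤ r ∧
      ((A₂.map Prod.fst).filter (· ≠ 1)).length ≤ s) ∧
    (Odd (Nat.card G) →
      ∃ T₁ T₂ : List G, T₁.length = r ∧ T₂.length = s ∧
        IsRamificationStructure T₁ T₂) :=
  stmt_19_general hcop hnc r s A₁ A₂ hl₁ hl₂ hA
end
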